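/- Let D = \{z \in \mathbb{C}^2 : |z_1|^2 + |z_2|^2 + 4|1-z_1z_2|^2 < 3\}. The loop \gamma: [0,2\pi] \to \mathbb{C}^2, \gamma(\theta) = (e^{i\theta}, e^{-i\theta}), takes values in D, and the line integral \int_\gamma \frac{dz_1}{z_1} = 2\pi i \ne 0. Consequently, since dz_1/z_1 is a closed holomorphic 1-form on D (note z_1 \ne 0 on D), the first de Rham cohomology H^1(D,\mathbb{C}) is nonzero; in particular D is not simply connected. -/

import Mathlib

open Complex Real

noncomputable section

/-- The domain `D = {|z₁|² + |z₂|² + 4|1-z₁z₂|² < 3} ⊂ ℂ²`. -/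
def Dom : Set (EuclideanSpace ℂ (Fin 2)) :=
  {z | ‖z 0‖ ^ 2 + ‖z 1‖ ^ 2 + 4 * ‖1 - z 0 * z 1‖ ^ 2 < 3}

/-- The loop `γ(θ) = (e^{iθ}, e^{-iθ})`. -/
def loop (θ : ℝ) : EuclideanSpace ℂ (Fin 2) :=
  (WithLp.equiv 2 (Fin 2 → ℂ)).symm
    ![Complex.exp (Complex.I * θ), Complex.exp (-(Complex.I * θ))]

/-!
The map `z ↦ z₀` sends `D` into `ℂ \ {0}` and the loop `γ` once around the unit circle. If `D`
were simply connected, `z₀` would have a continuous logarithm `f` on `D` (lift through the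
covering map `exp : ℂ → ℂ \ {0}`); then `f (γ θ) - iθ` is continuous with values in `2πiℤ`, hence
constant, which contradicts `γ (2π) = γ 0`. In the same way a primitive `F` of `dz₀/z₀` would have
`(F ∘ γ)' = i`, so `F (γ (2π)) - F (γ 0) = 2πi ≠ 0`.
-/

lemma loop_apply_zero (θ : ℝ) : loop θ 0 = exp (I * θ) := rfl

lemma loop_apply_one (θ : ℝ) : loop θ 1 = exp (-(I * θ)) := rfl

lemma loop_mem_Dom (θ : ℝ) : loop θ ∈ Dom := by
  have h₀ : ‖loop θ 0‖ = 1 := by rw [loop_apply_zero, mul_comm, norm_exp_ofReal_mul_I]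
  have h₁ : ‖loop θ 1‖ = 1 := by
    rw [loop_apply_one, Complex.exp_neg, norm_inv, mul_comm, norm_exp_ofReal_mul_I, inv_one]
  have h₀₁ : loop θ 0 * loop θ 1 = 1 := by
    rw [loop_apply_zero, loop_apply_one, ← Complex.exp_add, add_neg_cancel, Complex.exp_zero]
  show ‖loop θ 0‖ ^ 2 + ‖loop θ 1‖ ^ 2 + 4 * ‖1 - loop θ 0 * loop θ 1‖ ^ 2 < 3
  rw [h₀, h₁, h₀₁]
  norm_num

lemma apply_zero_ne_zero_of_mem_Dom {z : EuclideanSpace ℂ (Fin 2)} (hz : z ∈ Dom) :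
    z 0 ≠ 0 := by
  intro h
  have hz : ‖z 0‖ ^ 2 + ‖z 1‖ ^ 2 + 4 * ‖1 - z 0 * z 1‖ ^ 2 < 3 := hz
  simp only [h, norm_zero, zero_mul, sub_zero, norm_one] at hz
  nlinarith [sq_nonneg ‖z 1‖]

lemma isOpen_Dom : IsOpen Dom :=
  isOpen_lt (by fun_prop) continuous_const

lemma loop_two_pi : loop (2 * π) = loop 0 := by
  have h : exp (I * (2 * π)) = 1 := by rw [mul_comm, exp_two_pi_mul_I]
  simp [loop, h, Complex.exp_neg]

lemma hasDerivAt_cexp_mul_ofReal (c : ℂ) (θ : ℝ) :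
    HasDerivAt (fun t : ℝ => exp (c * t)) (c * exp (c * θ)) θ := by
  simpa [mul_comm] using ((hasDerivAt_id θ).ofReal_comp.const_mul c).cexp

lemma hasDerivAt_loop (θ : ℝ) :
    HasDerivAt loop (WithLp.toLp 2 ![I * exp (I * θ), -I * exp (-(I * θ))]) θ := by
  have h : HasDerivAt (fun t : ℝ => ![exp (I * t), exp (-(I * t))])
      ![I * exp (I * θ), -I * exp (-(I * θ))] θ := by
    rw [hasDerivAt_pi]
    intro i
    fin_cases i
    exacts [hasDerivAt_cexp_mul_ofReal I θ, by simpa using hasDerivAt_cexp_mul_ofReal (-I) θ]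
  exact (PiLp.continuousLinearEquiv 2 ℝ (fun _ : Fin 2 => ℂ)).symm.hasFDerivAt.comp_hasDerivAt θ h

lemma continuous_loop : Continuous loop :=
  continuous_iff_continuousAt.mpr fun θ => (hasDerivAt_loop θ).continuousAt

theorem Complex.sub_eq_sub_of_exp_eq {A : Type*} [TopologicalSpace A] [PreconnectedSpace A]
    {f g : A → ℂ} (hf : Continuous f) (hg : Continuous g) (h : ∀ a, exp (f a) = exp (g a))
    (a b : A) : f a - g a = f b - g b :=
  isCoveringMap_exp.const_of_comp (hf.sub hg) (fun a b => by simp [exp_sub, h]) a b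

theorem not_isSimplyConnected_of_exp_loop {X : Type*} [TopologicalSpace X]
    [LocallyPathConnectedSpace X] {U : Set X} (hU : IsOpen U) {g : X → ℂ}
    (hg : ContinuousOn g U) (hg₀ : ∀ x ∈ U, g x ≠ 0) {γ : ℝ → X} (hγ : Continuous γ)
    (hγU : ∀ θ, γ θ ∈ U) (hγg : ∀ θ : ℝ, g (γ θ) = exp (I * θ)) (hγ_closed : γ (2 * π) = γ 0) :
    ¬ IsSimplyConnected U := by
  intro hUsc
  obtain ⟨f, hfc, hf⟩ := exists_continuousOn_eqOn_exp_comp hUsc hU hg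
    (fun ⟨x, hx, hgx⟩ => hg₀ x hx hgx)
  have hlift := Complex.sub_eq_sub_of_exp_eq (hfc.comp_continuous hγ hγU)
    (continuous_const.mul continuous_ofReal) (fun θ => (hf (hγU θ)).trans (hγg θ)) (2 * π) 0
  simp [hγ_closed, pi_ne_zero] at hlift

lemma not_isSimplyConnected_Dom : ¬ IsSimplyConnected Dom :=
  not_isSimplyConnected_of_exp_loop isOpen_Dom (by fun_prop)
    (fun _ hz => apply_zero_ne_zero_of_mem_Dom hz) continuous_loop loop_mem_Dom loop_apply_zero
    loop_two_pi

lemma integral_deriv_div_cexp_I_mul :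
    ∫ θ in (0 : ℝ)..(2 * π), deriv (fun t : ℝ => exp (I * t)) θ / exp (I * θ) = 2 * π * I := by
  have h : ∀ θ : ℝ, deriv (fun t : ℝ => exp (I * t)) θ / exp (I * θ) = I := fun θ => by
    rw [(hasDerivAt_cexp_mul_ofReal I θ).deriv, mul_div_cancel_right₀ _ (Complex.exp_ne_zero _)]
  simp [h, mul_comm]

lemma hasDerivAt_comp_loop {F : EuclideanSpace ℂ (Fin 2) → ℂ}
    (hF : ∀ z ∈ Dom, HasFDerivAt F ((1 / z 0) •
        (EuclideanSpace.proj (0 : Fin 2) : EuclideanSpace ℂ (Fin 2) →L[ℂ] ℂ)) z) (θ : ℝ) :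
    HasDerivAt (F ∘ loop) I θ := by
  have h := ((hF _ (loop_mem_Dom θ)).restrictScalars ℝ).comp_hasDerivAt θ (hasDerivAt_loop θ)
  have hI : (exp (I * θ))⁻¹ * (I * exp (I * θ)) = I := by field_simp
  simpa [loop_apply_zero, hI] using h

lemma not_exists_primitive_dz₀_div_z₀ :
    ¬ ∃ F : EuclideanSpace ℂ (Fin 2) → ℂ, ∀ z ∈ Dom,
      HasFDerivAt F ((1 / z 0) •
        (EuclideanSpace.proj (0 : Fin 2) : EuclideanSpace ℂ (Fin 2) →L[ℂ] ℂ)) z := by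
  rintro ⟨F, hF⟩
  have h := intervalIntegral.integral_eq_sub_of_hasDerivAt (a := 0) (b := 2 * π)
    (fun θ _ => hasDerivAt_comp_loop hF θ) intervalIntegrable_const
  simp [loop_two_pi, pi_ne_zero] at h

/-- The loop `γ(θ) = (e^{iθ}, e^{-iθ})` lies in `D`, the line integral of `dz₁/z₁` along it
equals `2πi ≠ 0`, hence the closed holomorphic 1-form `dz₁/z₁` (note `z₁ ≠ 0` on `D`) is
not exact on `D`; in particular `H¹(D,ℂ) ≠ 0` and `D` is not simply connected. -/
theorem stmt12 :
    (∀ θ : ℝ, loop θ ∈ Dom) ∧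
    (∫ θ in (0 : ℝ)..(2 * π),
        deriv (fun t : ℝ => Complex.exp (Complex.I * t)) θ / Complex.exp (Complex.I * θ))
      = 2 * π * Complex.I ∧
    (2 * (π : ℂ) * Complex.I ≠ 0) ∧
    (∀ z ∈ Dom, z 0 ≠ 0) ∧
    (¬ ∃ F : EuclideanSpace ℂ (Fin 2) → ℂ, ∀ z ∈ Dom,
      HasFDerivAt F ((1 / z 0) •
        (EuclideanSpace.proj (0 : Fin 2) : EuclideanSpace ℂ (Fin 2) →L[ℂ] ℂ)) z) ∧
    ¬ SimplyConnectedSpace Dom :=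
  ⟨loop_mem_Dom, integral_deriv_div_cexp_I_mul, by simp [pi_ne_zero],
    fun _ => apply_zero_ne_zero_of_mem_Dom, not_exists_primitive_dz₀_div_z₀,
    not_isSimplyConnected_Dom⟩

end
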